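/- arXiv:math/0605685 — 6 statements merged into one kernel-verified Lean document; each statement's English description precedes it below -/
import Mathlib

section
/- If α₁, α₂, …, α_r are roots of a crystallographic root system Φ and α₁ + α₂ + ⋯ + α_r = α is a root, then either α₁ = α, or there exists an index i with 2 ≤ i ≤ r such that α₁ + αᵢ is a root or zero. -/
/-!
Two roots with positive inner product differ by a root unless they are equal, and two roots with
negative inner product sum to a root or to zero: both follow from the reflections and the
integrality of the Cartan numbers, the only obstruction being `⟨a, b^∨⟩⟨b, a^∨⟩ = 4`, which by
the equality case of Cauchy–Schwarz forces `a = b` in a reduced system.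

Write `β = α₁` and `σ = α₂ + ⋯ + α_r`, and suppose `β + αᵢ` is neither a root nor zero for
every `i ≥ 2`, so that `⟪β, αᵢ⟫ ≥ 0`. If `σ ≠ 0`, the root `γ = β + σ` satisfies
`⟪γ, σ⟫ = ⟪β, σ⟫ + ‖σ‖² > 0`, hence `⟪γ, αᵢ⟫ > 0` for some `i ≥ 2`. Then either `γ = αᵢ`,
which makes `β` minus a sum of vectors with nonnegative inner product against `β`, absurd; or
`γ - αᵢ` is a root and `αᵢ` can be dropped from the sum, and induction on the number of summands
concludes.
-/

open scoped InnerProductSpace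

section

variable {V : Type*} [NormedAddCommGroup V] [InnerProductSpace ℝ V]

/-- The Cartan number `⟨b, a^∨⟩`. -/
noncomputable def cartan (a b : V) : ℝ := 2 * ⟪a, b⟫_ℝ / ⟪a, a⟫_ℝ

lemma cartan_pos_of_inner_pos {a b : V} (hab : 0 < ⟪a, b⟫_ℝ) : 0 < cartan a b := by
  have ha : a ≠ 0 := by rintro rfl; simp at hab
  unfold cartan
  have := real_inner_self_pos.2 ha
  positivity

lemma exists_pos_smul_eq_of_four_le_cartan_mul {a b : V} (hab : 0 < ⟪a, b⟫_ℝ)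
    (h : 4 ≤ cartan a b * cartan b a) : ∃ t : ℝ, 0 < t ∧ b = t • a := by
  have ha : a ≠ 0 := by rintro rfl; simp at hab
  have hb : b ≠ 0 := by rintro rfl; simp at hab
  have hna := norm_pos_iff.2 ha
  have hnb := norm_pos_iff.2 hb
  have hmul : cartan a b * cartan b a = 4 * (⟪a, b⟫_ℝ / (‖a‖ * ‖b‖)) ^ 2 := by
    simp only [cartan, real_inner_self_eq_norm_sq, real_inner_comm a b]
    field_simp
    ring
  have hle : ⟪a, b⟫_ℝ / (‖a‖ * ‖b‖) ≤ 1 :=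
    (div_le_one (by positivity)).2 (real_inner_le_norm a b)
  have hpos : 0 < ⟪a, b⟫_ℝ / (‖a‖ * ‖b‖) := by positivity
  have hone : ⟪a, b⟫_ℝ / (‖a‖ * ‖b‖) = 1 := by nlinarith
  exact ((real_inner_div_norm_mul_norm_eq_one_iff a b).1 hone).2

structure IsReducedCrystallographic (Φ : Set V) : Prop where
  zero_notMem : (0 : V) ∉ Φ
  sub_smul_mem : ∀ a ∈ Φ, ∀ b ∈ Φ, b - cartan a b • a ∈ Φ
  exists_int_cartan : ∀ a ∈ Φ, ∀ b ∈ Φ, ∃ k : ℤ, cartan a b = k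
  eq_one_or_neg_one_of_smul_mem : ∀ a ∈ Φ, ∀ t : ℝ, t • a ∈ Φ → t = 1 ∨ t = -1

namespace IsReducedCrystallographic

variable {Φ : Set V} {a b : V}

lemma ne_zero (hΦ : IsReducedCrystallographic Φ) (ha : a ∈ Φ) : a ≠ 0 := by
  rintro rfl
  exact hΦ.zero_notMem ha

lemma neg_mem (hΦ : IsReducedCrystallographic Φ) (ha : a ∈ Φ) : -a ∈ Φ := by
  have h := hΦ.sub_smul_mem a ha a ha
  have hc : cartan a a = 2 := by
    have := real_inner_self_pos.2 (hΦ.ne_zero ha)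
    unfold cartan
    field_simp
  rwa [hc, two_smul, sub_add_cancel_left] at h

lemma eq_of_four_le_cartan_mul (hΦ : IsReducedCrystallographic Φ) (ha : a ∈ Φ) (hb : b ∈ Φ)
    (hab : 0 < ⟪a, b⟫_ℝ) (h : 4 ≤ cartan a b * cartan b a) : a = b := by
  obtain ⟨t, ht, rfl⟩ := exists_pos_smul_eq_of_four_le_cartan_mul hab h
  rcases hΦ.eq_one_or_neg_one_of_smul_mem a ha t hb with rfl | rfl
  · rw [one_smul]
  · norm_num at ht

lemma sub_mem_or_eq_of_inner_pos (hΦ : IsReducedCrystallographic Φ) (ha : a ∈ Φ) (hb : b ∈ Φ)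
    (hab : 0 < ⟪a, b⟫_ℝ) : a - b ∈ Φ ∨ a = b := by
  obtain ⟨k, hk⟩ := hΦ.exists_int_cartan b hb a ha
  obtain ⟨m, hm⟩ := hΦ.exists_int_cartan a ha b hb
  have hk0 : (0 : ℝ) < k := hk ▸ cartan_pos_of_inner_pos (real_inner_comm a b ▸ hab)
  have hm0 : (0 : ℝ) < m := hm ▸ cartan_pos_of_inner_pos hab
  by_cases hk1 : k = 1
  · left
    simpa [hk, hk1] using hΦ.sub_smul_mem b hb a ha
  by_cases hm1 : m = 1
  · left
    simpa [hm, hm1] using hΦ.neg_mem (hΦ.sub_smul_mem a ha b hb)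
  right
  have hk2 : (2 : ℝ) ≤ k := by
    have : (0 : ℤ) < k := by exact_mod_cast hk0
    exact_mod_cast (by omega : (2 : ℤ) ≤ k)
  have hm2 : (2 : ℝ) ≤ m := by
    have : (0 : ℤ) < m := by exact_mod_cast hm0
    exact_mod_cast (by omega : (2 : ℤ) ≤ m)
  exact hΦ.eq_of_four_le_cartan_mul ha hb hab (by rw [hk, hm]; nlinarith)

lemma add_mem_or_eq_zero_of_inner_neg (hΦ : IsReducedCrystallographic Φ) (ha : a ∈ Φ)
    (hb : b ∈ Φ) (hab : ⟪a, b⟫_ℝ < 0) : a + b ∈ Φ ∨ a + b = 0 := by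
  have h := hΦ.sub_mem_or_eq_of_inner_pos ha (hΦ.neg_mem hb) (by rw [inner_neg_right]; linarith)
  rwa [sub_neg_eq_add, eq_neg_iff_add_eq_zero] at h

lemma sum_eq_zero_or_exists_add_mem (hΦ : IsReducedCrystallographic Φ) {ι : Type*}
    (f : ι → V) (hb : b ∈ Φ) (s : Finset ι) (hf : ∀ i ∈ s, f i ∈ Φ)
    (hsum : b + ∑ i ∈ s, f i ∈ Φ) :
    ∑ i ∈ s, f i = 0 ∨ ∃ i ∈ s, b + f i ∈ Φ ∨ b + f i = 0 := by
  classical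
  induction s using Finset.strongInduction with
  | H s ih =>
  by_contra! ⟨hσ, hno⟩
  have hnonneg : ∀ i ∈ s, 0 ≤ ⟪b, f i⟫_ℝ := fun i hi ↦ by
    by_contra! hneg
    exact (hΦ.add_mem_or_eq_zero_of_inner_neg hb (hf i hi) hneg).elim (hno i hi).1 (hno i hi).2
  have hinner_nonneg : ∀ t ⊆ s, 0 ≤ ⟪b, ∑ i ∈ t, f i⟫_ℝ := fun t ht ↦ by
    rw [inner_sum]
    exact Finset.sum_nonneg fun i hi ↦ hnonneg i (ht hi)
  have hγσ : 0 < ⟪b + ∑ i ∈ s, f i, ∑ i ∈ s, f i⟫_ℝ := by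
    rw [inner_add_left]
    linarith [real_inner_self_pos.2 hσ, hinner_nonneg s subset_rfl]
  obtain ⟨i, hi, hγi⟩ : ∃ i ∈ s, 0 < ⟪b + ∑ i ∈ s, f i, f i⟫_ℝ := by
    rw [inner_sum] at hγσ
    exact Finset.exists_lt_of_sum_lt (by simpa using hγσ)
  have hsub : s.erase i ⊆ s := Finset.erase_subset i s
  rw [← Finset.add_sum_erase s f hi] at hsum hγi
  rcases hΦ.sub_mem_or_eq_of_inner_pos hsum (hf i hi) hγi with hmem | heq
  · rw [add_left_comm, add_sub_cancel_left] at hmem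
    rcases ih _ (Finset.erase_ssubset hi) (fun j hj ↦ hf j (hsub hj)) hmem with h | ⟨j, hj, h⟩
    · exact (hno i hi).1 (by simpa [h] using hsum)
    · exact h.elim (hno j (hsub hj)).1 (hno j (hsub hj)).2
  · rw [add_left_comm, add_eq_left] at heq
    have hneg : ⟪b, b⟫_ℝ ≤ 0 :=
      calc ⟪b, b⟫_ℝ = -⟪b, ∑ j ∈ s.erase i, f j⟫_ℝ := by
            rw [← inner_neg_right, ← eq_neg_of_add_eq_zero_left heq]
        _ ≤ 0 := neg_nonpos.2 (hinner_nonneg _ hsub)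
    exact (real_inner_self_pos.2 (hΦ.ne_zero hb)).not_ge hneg

end IsReducedCrystallographic

end

theorem sum_of_roots_first_summand_alternative_general
    {V : Type*} [NormedAddCommGroup V] [InnerProductSpace ℝ V]
    (Φ : Finset V)
    (hzero : (0 : V) ∉ Φ)
    (hrefl : ∀ α ∈ Φ, ∀ β ∈ Φ, β - (2 * ⟪α, β⟫_ℝ / ⟪α, α⟫_ℝ) • α ∈ Φ)
    (hcrys : ∀ α ∈ Φ, ∀ β ∈ Φ, ∃ k : ℤ, 2 * ⟪α, β⟫_ℝ / ⟪α, α⟫_ℝ = (k : ℝ))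
    (hred : ∀ α ∈ Φ, ∀ t : ℝ, t • α ∈ Φ → t = 1 ∨ t = -1)
    (r : ℕ) (hr : 1 ≤ r) (α : Fin r → V)
    (hmem : ∀ i, α i ∈ Φ)
    (hsummem : (∑ i, α i) ∈ Φ) :
    α ⟨0, hr⟩ = ∑ i, α i ∨
      ∃ i : Fin r, 1 ≤ (i : ℕ) ∧ (α ⟨0, hr⟩ + α i ∈ Φ ∨ α ⟨0, hr⟩ + α i = 0) := by
  have hΦ : IsReducedCrystallographic (Φ : Set V) := ⟨hzero, hrefl, hcrys, hred⟩
  rw [← Finset.add_sum_erase _ _ (Finset.mem_univ ⟨0, hr⟩)] at hsummem ⊢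
  rcases hΦ.sum_eq_zero_or_exists_add_mem α (hmem _) _ (fun i _ ↦ hmem i) hsummem with
    h | ⟨i, hi, h⟩
  · exact Or.inl (by rw [h, add_zero])
  · refine Or.inr ⟨i, Nat.one_le_iff_ne_zero.2 fun h0 ↦ Finset.ne_of_mem_erase hi ?_, h⟩
    exact Fin.ext h0

/-- Lemma 2.1(ii): if `α₁, …, α_r` are roots of a crystallographic root system `Φ` and
`α₁ + ⋯ + α_r = α` is a root, then either `α₁ = α` or there is an index `i ≥ 2` such
that `α₁ + αᵢ` is a root or zero. -/
theorem sum_of_roots_first_summand_alternative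
    {V : Type*} [NormedAddCommGroup V] [InnerProductSpace ℝ V]
    (Φ : Finset V)
    (hzero : (0 : V) ∉ Φ)
    (hspan : Submodule.span ℝ (Φ : Set V) = ⊤)
    (hrefl : ∀ α ∈ Φ, ∀ β ∈ Φ, β - (2 * ⟪α, β⟫_ℝ / ⟪α, α⟫_ℝ) • α ∈ Φ)
    (hcrys : ∀ α ∈ Φ, ∀ β ∈ Φ, ∃ k : ℤ, 2 * ⟪α, β⟫_ℝ / ⟪α, α⟫_ℝ = (k : ℝ))
    (hred : ∀ α ∈ Φ, ∀ t : ℝ, t • α ∈ Φ → t = 1 ∨ t = -1)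
    (r : ℕ) (hr : 1 ≤ r) (α : Fin r → V)
    (hmem : ∀ i, α i ∈ Φ)
    (hsummem : (∑ i, α i) ∈ Φ) :
    α ⟨0, hr⟩ = ∑ i, α i ∨
      ∃ i : Fin r, 1 ≤ (i : ℕ) ∧ (α ⟨0, hr⟩ + α i ∈ Φ ∨ α ⟨0, hr⟩ + α i = 0) :=
  sum_of_roots_first_summand_alternative_general Φ hzero hrefl hcrys hred r hr α hmem hsummem
end

section
/- For the root system Φ = A_{n−1} and positive integers m, n with 0 ≤ i ≤ n−1, the numbers h⁺ᵢ(A_{n−1}, m) = (1/(i+1))·C(n−1, i)·C(mn−2, i) satisfy Σᵢ h⁺ᵢ(A_{n−1}, m) = ∏_{j=1}^{n−1} (e_j + mn − 1)/(e_j + 1), where e_j = j are the exponents of A_{n−1}; equivalently, Σ_{i=0}^{n−1} (1/(i+1))·C(n−1,i)·C(mn−2,i) = (1/n)·C((m+1)n − 2, n − 1). -/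
/-!
Absorption, `C(n-1,i)/(i+1) = C(n,i+1)/n`, turns the sum into `(1/n)·∑ᵢ C(n,i+1)·C(mn-2,i)`,
which is the Vandermonde convolution `C(n + mn - 2, n - 1)`. The product telescopes to the same
number, since `∏_{j=1}^{t} (j + K) = (K+t)!/K!` and `∏_{j=1}^{t} (j + 1) = (t+1)!`.
-/

open Finset

theorem Nat.sum_range_choose_succ_mul_choose (n N : ℕ) :
    ∑ i ∈ range (n + 1), (n + 1).choose (i + 1) * N.choose i = (N + (n + 1)).choose n := by
  rw [Nat.add_choose_eq, Finset.Nat.sum_antidiagonal_eq_sum_range_succ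
    (fun a b => N.choose a * (n + 1).choose b)]
  refine sum_congr rfl fun i hi => ?_
  have hin : i ≤ n := Nat.lt_succ_iff.mp (mem_range.mp hi)
  rw [mul_comm, Nat.choose_symm_of_eq_add (by omega : n + 1 = (i + 1) + (n - i))]

theorem sum_range_inv_succ_mul_choose_mul_choose (n N : ℕ) :
    ∑ i ∈ range (n + 1), (1 / (i + 1 : ℚ)) * (n.choose i : ℚ) * (N.choose i : ℚ)
      = (1 / (n + 1 : ℚ)) * ((N + (n + 1)).choose n : ℚ) := by
  have absorption (i : ℕ) :
      (1 / (i + 1 : ℚ)) * (n.choose i : ℚ) = (1 / (n + 1 : ℚ)) * ((n + 1).choose (i + 1) : ℚ) := by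
    have h : (n + 1 : ℚ) * n.choose i = (n + 1).choose (i + 1) * (i + 1) := by
      exact_mod_cast Nat.add_one_mul_choose_eq n i
    field_simp
    linear_combination h
  simp_rw [absorption, mul_assoc, ← mul_sum]
  exact_mod_cast congrArg (fun x : ℕ => (1 / (n + 1 : ℚ)) * x)
    (Nat.sum_range_choose_succ_mul_choose n N)

theorem prod_Icc_add_div_add_one (K t : ℕ) :
    ∏ j ∈ Icc 1 t, ((j : ℚ) + K) / ((j : ℚ) + 1) = (1 / (t + 1 : ℚ)) * ((K + t).choose t : ℚ) := by
  induction t with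
  | zero => simp
  | succ t ih =>
    rw [prod_Icc_succ_top (by omega), ih]
    have h : (K + t + 1 : ℚ) * (K + t).choose t = (K + t + 1).choose (t + 1) * (t + 1) := by
      exact_mod_cast Nat.add_one_mul_choose_eq (K + t) t
    rw [← add_assoc]
    push_cast
    field_simp
    linear_combination h

/-- The refined numbers `h⁺ᵢ(A_{n−1}, m) = (1/(i+1))·C(n−1,i)·C(mn−2,i)` sum to the
positive Fuss–Catalan number `N⁺(A_{n−1}, m) = ∏_{j=1}^{n−1} (j + mn − 1)/(j + 1)
= (1/n)·C((m+1)n − 2, n − 1)`. -/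
theorem hplus_sum_typeA (m n : ℕ) (hm : 1 ≤ m) (hn : 2 ≤ n) :
    (∑ i ∈ Finset.range n,
        (1 / (i + 1 : ℚ)) * ((n - 1).choose i : ℚ) * ((m * n - 2).choose i : ℚ))
        = ∏ j ∈ Finset.Icc 1 (n - 1), ((j : ℚ) + m * n - 1) / ((j : ℚ) + 1) ∧
    (∑ i ∈ Finset.range n,
        (1 / (i + 1 : ℚ)) * ((n - 1).choose i : ℚ) * ((m * n - 2).choose i : ℚ))
        = (1 / (n : ℚ)) * (((m + 1) * n - 2).choose (n - 1) : ℚ) := by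
  obtain ⟨k, rfl⟩ : ∃ k, n = k + 1 := ⟨n - 1, by omega⟩
  obtain ⟨N, hN⟩ : ∃ N, m * (k + 1) = N + 2 :=
    ⟨m * (k + 1) - 2, by have := Nat.mul_le_mul hm hn; omega⟩
  have hsum := sum_range_inv_succ_mul_choose_mul_choose k N
  have hprod := prod_Icc_add_div_add_one (N + 1) k
  rw [show N + 1 + k = N + (k + 1) by ring] at hprod
  have hNq : (m : ℚ) * (k + 1) = N + 2 := by exact_mod_cast hN
  have hN' : (m + 1) * (k + 1) - 2 = N + (k + 1) := by rw [add_mul]; omega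
  simp only [Nat.add_sub_cancel, hN, hN']
  push_cast at hprod ⊢
  rw [hsum, ← hprod, hNq]
  refine ⟨prod_congr rfl fun j _ => by ring_nf, rfl⟩
end

section
/- For integers n ≥ 2, m ≥ 1 and 0 ≤ k ≤ n, the alternating-sum relation Σ_{i=0}^{k} C(n,i)·C(mn−1,i)·C(n−i, n−k) = C(n,k)·C(mn+k−1, k) holds; that is, the f-numbers f⁺_{k−1}(B_n, m) = C(n,k)·C(mn+k−1,k) are determined from the h-numbers h⁺ᵢ(B_n, m) = C(n,i)·C(mn−1,i) by the standard f-h relation Σ_{i=0}^{n} f⁺_{i−1}(x−1)^{n−i} = Σ_{i=0}^{n} h⁺ᵢ x^{n−i}. -/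
/-!
Choosing an `i`-subset and then `k - i` further elements out of `n` is choosing a `k`-subset
and an `i`-subset inside it: `C(n,i)·C(n−i,n−k) = C(n,k)·C(k,i)`. This pulls `C(n,k)` out of
the sum, and what is left, `Σ C(N,i)·C(k,k−i)` with `N = mn − 1`, is Vandermonde's convolution
`C(N+k,k)`.
-/

open Finset

namespace Nat

theorem sum_range_choose_mul_choose (N k : ℕ) :
    ∑ i ∈ range (k + 1), N.choose i * k.choose i = (N + k).choose k := by
  rw [add_choose_eq, Finset.Nat.sum_antidiagonal_eq_sum_range_succ_mk]
  refine sum_congr rfl fun i hi => ?_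
  rw [choose_symm (mem_range_succ_iff.mp hi)]

theorem choose_mul_choose_sub_sub {n k i : ℕ} (hik : i ≤ k) (hkn : k ≤ n) :
    n.choose i * (n - i).choose (n - k) = n.choose k * k.choose i := by
  rw [choose_mul hik, ← choose_symm (n := n - i) (by omega)]
  congr 2
  omega

theorem sum_choose_mul_choose_mul_choose_sub_sub (N : ℕ) {n k : ℕ} (hkn : k ≤ n) :
    ∑ i ∈ range (k + 1), n.choose i * N.choose i * (n - i).choose (n - k)
      = n.choose k * (N + k).choose k := by
  rw [← sum_range_choose_mul_choose, mul_sum]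
  refine sum_congr rfl fun i hi => ?_
  rw [mul_right_comm, choose_mul_choose_sub_sub (mem_range_succ_iff.mp hi) hkn]
  ring

end Nat

/-- The f-numbers `f⁺_{k−1}(B_n, m) = C(n,k)·C(mn+k−1,k)` are determined from the
h-numbers `h⁺ᵢ(B_n, m) = C(n,i)·C(mn−1,i)` by the standard f-h relation
`f⁺_{k−1} = Σ_{i=0}^{k} h⁺ᵢ·C(n−i, n−k)`. -/
theorem fh_relation_typeB (m n k : ℕ) (hn : 2 ≤ n) (hm : 1 ≤ m) (hk : k ≤ n) :
    ∑ i ∈ Finset.range (k + 1),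
        n.choose i * (m * n - 1).choose i * (n - i).choose (n - k)
      = n.choose k * (m * n + k - 1).choose k := by
  have hmn : 1 ≤ m * n := Nat.mul_pos hm (by omega)
  rw [show m * n + k - 1 = (m * n - 1) + k by omega]
  exact Nat.sum_choose_mul_choose_mul_choose_sub_sub (m * n - 1) hk
end

section
/- Let Φ⁺ be the positive roots of A_{n−1}, identified with pairs (i,j), 1 ≤ i < j ≤ n, ordered by (i,j) ≤ (k,l) iff k ≤ i and j ≤ l. Then the number of order filters in Φ⁺ containing no simple root (i.e., no pair of the form (i, i+1)) equals the Catalan number C_{n−1} = (1/n)·C(2n−2, n−1). -/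
set_option maxHeartbeats 1000000

namespace CatAux

/-- Monotone sequences `m : Fin k → ℕ` with `m i ≤ i`. -/
def Mon (k : ℕ) : Type := {m : Fin k → ℕ // Monotone m ∧ ∀ i : Fin k, m i ≤ (i : ℕ)}

instance (k : ℕ) : Finite (Mon k) := by
  apply Finite.of_injective
    (fun m : Mon k => fun i : Fin k => (⟨m.1 i, by have h := m.2.2 i; have := i.isLt; omega⟩ :
      Fin (k+1)))
  intro a b h
  apply Subtype.ext; funext i
  exact congrArg Fin.val (congrFun h i)

noncomputable instance (k : ℕ) : Fintype (Mon k) := Fintype.ofFinite _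

instance : Unique (Mon 0) where
  default := ⟨fun i => i.elim0, fun i => i.elim0, fun i => i.elim0⟩
  uniq := fun x => by apply Subtype.ext; funext i; exact i.elim0

lemma maxSet_nonempty {k : ℕ} (m : Mon (k+1)) :
    (Finset.univ.filter (fun i : Fin (k+1) => m.1 i = (i : ℕ))).Nonempty := by
  refine ⟨0, ?_⟩
  simp only [Finset.mem_filter, Finset.mem_univ, true_and]
  have := m.2.2 0
  simpa using Nat.le_zero.mp (by simpa using this)

/-- The largest index where `m i = i`. -/
noncomputable def maxIdx {k : ℕ} (m : Mon (k+1)) : Fin (k+1) :=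
  (Finset.univ.filter (fun i : Fin (k+1) => m.1 i = (i : ℕ))).max' (maxSet_nonempty m)

lemma maxIdx_fix {k : ℕ} (m : Mon (k+1)) : m.1 (maxIdx m) = (maxIdx m : ℕ) := by
  have := Finset.max'_mem _ (maxSet_nonempty m)
  simpa only [maxIdx, Finset.mem_filter, Finset.mem_univ, true_and] using this

lemma le_maxIdx {k : ℕ} (m : Mon (k+1)) (i : Fin (k+1)) (h : m.1 i = (i : ℕ)) :
    i ≤ maxIdx m :=
  Finset.le_max' _ i (by simp [h])

/-- Glue two sequences into one, with a fixed point at `j`. -/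
def glue {k : ℕ} (j : Fin (k+1)) (a : Mon j) (b : Mon (k - j)) : Fin (k+1) → ℕ :=
  fun i => if h : (i : ℕ) < j then a.1 ⟨i, h⟩
    else if h2 : (j : ℕ) < i then b.1 ⟨(i : ℕ) - ((j : ℕ)+1), by have := i.isLt; have := j.isLt; omega⟩ + j
    else j

lemma glue_lt {k : ℕ} (j : Fin (k+1)) (a : Mon j) (b : Mon (k - j)) (i : Fin (k+1))
    (h : (i : ℕ) < j) : glue j a b i = a.1 ⟨i, h⟩ := dif_pos h

lemma glue_eq {k : ℕ} (j : Fin (k+1)) (a : Mon j) (b : Mon (k - j)) (i : Fin (k+1))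
    (h : (i : ℕ) = j) : glue j a b i = j := by
  unfold glue
  rw [dif_neg (by omega), dif_neg (by omega)]

lemma glue_gt {k : ℕ} (j : Fin (k+1)) (a : Mon j) (b : Mon (k - j)) (i : Fin (k+1))
    (h : (j : ℕ) < i) :
    glue j a b i = b.1 ⟨(i : ℕ) - ((j : ℕ)+1), by have := i.isLt; have := j.isLt; omega⟩ + j := by
  unfold glue
  rw [dif_neg (by omega), dif_pos h]

lemma glue_le {k : ℕ} (j : Fin (k+1)) (a : Mon j) (b : Mon (k - j)) (i : Fin (k+1)) :
    glue j a b i ≤ (i : ℕ) := by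
  rcases lt_trichotomy (i : ℕ) (j : ℕ) with h | h | h
  · rw [glue_lt j a b i h]; exact a.2.2 ⟨i, h⟩
  · rw [glue_eq j a b i h]; omega
  · rw [glue_gt j a b i h]
    have := b.2.2 ⟨(i : ℕ) - ((j : ℕ)+1), by have := i.isLt; have := j.isLt; omega⟩
    simp only at this
    omega

lemma glue_lt_self {k : ℕ} (j : Fin (k+1)) (a : Mon j) (b : Mon (k - j)) (i : Fin (k+1))
    (h : (j : ℕ) < i) : glue j a b i < (i : ℕ) := by
  rw [glue_gt j a b i h]
  have := b.2.2 ⟨(i : ℕ) - ((j : ℕ)+1), by have := i.isLt; have := j.isLt; omega⟩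
  simp only at this
  omega

lemma glue_mono {k : ℕ} (j : Fin (k+1)) (a : Mon j) (b : Mon (k - j)) :
    Monotone (glue j a b) := by
  intro s t hst
  have hst' : (s : ℕ) ≤ (t : ℕ) := hst
  rcases lt_trichotomy (t : ℕ) (j : ℕ) with ht | ht | ht
  · have hs : (s : ℕ) < j := by omega
    rw [glue_lt j a b s hs, glue_lt j a b t ht]
    exact a.2.1 (show (⟨(s:ℕ), hs⟩ : Fin j) ≤ ⟨(t:ℕ), ht⟩ from hst')
  · rw [glue_eq j a b t ht]
    have := glue_le j a b s
    omega
  · rw [glue_gt j a b t ht]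
    rcases lt_trichotomy (s : ℕ) (j : ℕ) with hs | hs | hs
    · rw [glue_lt j a b s hs]
      have := a.2.2 ⟨(s : ℕ), hs⟩
      simp only at this
      omega
    · rw [glue_eq j a b s hs]; omega
    · rw [glue_gt j a b s hs]
      have := b.2.1 (show (⟨(s:ℕ) - ((j:ℕ)+1), by have := s.isLt; have := j.isLt; omega⟩ : Fin (k - j)) ≤
        ⟨(t:ℕ) - ((j:ℕ)+1), by have := t.isLt; have := j.isLt; omega⟩ from by
          show (s:ℕ) - ((j:ℕ)+1) ≤ (t:ℕ) - ((j:ℕ)+1); omega)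
      omega

/-- The gluing map into `Mon (k+1)`. -/
def glueMon {k : ℕ} (x : Σ j : Fin (k+1), Mon j × Mon (k - j)) : Mon (k+1) :=
  ⟨glue x.1 x.2.1 x.2.2, glue_mono _ _ _, glue_le _ _ _⟩

lemma maxIdx_glueMon {k : ℕ} (j : Fin (k+1)) (a : Mon j) (b : Mon (k - j)) :
    maxIdx (glueMon ⟨j, (a, b)⟩) = j := by
  apply le_antisymm
  · by_contra hcon
    have h' : (j : ℕ) < ((maxIdx (glueMon ⟨j, (a, b)⟩)) : ℕ) := not_le.mp hcon
    have h1 := maxIdx_fix (glueMon ⟨j, (a, b)⟩)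
    have h2 := glue_lt_self j a b (maxIdx (glueMon ⟨j, (a, b)⟩)) h'
    have h3 : (glueMon ⟨j, (a, b)⟩).1 (maxIdx (glueMon ⟨j, (a, b)⟩)) =
        glue j a b (maxIdx (glueMon ⟨j, (a, b)⟩)) := rfl
    omega
  · exact le_maxIdx _ j (glue_eq j a b j rfl)

lemma glueMon_injective (k : ℕ) : Function.Injective (glueMon (k := k)) := by
  rintro ⟨j, a, b⟩ ⟨j', a', b'⟩ h
  have hj : j = j' := by
    have h1 : maxIdx (glueMon ⟨j, (a, b)⟩) = j := maxIdx_glueMon j a b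
    have h2 : maxIdx (glueMon ⟨j', (a', b')⟩) = j' := maxIdx_glueMon j' a' b'
    rw [← h1, h, h2]
  subst hj
  have hfun : glue j a b = glue j a' b' := congrArg Subtype.val h
  have ha : a = a' := by
    apply Subtype.ext; funext t
    have h1 : glue j a b ⟨(t : ℕ), lt_trans t.isLt j.isLt⟩ = a.1 t := by
      rw [glue_lt j a b ⟨(t : ℕ), lt_trans t.isLt j.isLt⟩ t.isLt]
    have h2 : glue j a' b' ⟨(t : ℕ), lt_trans t.isLt j.isLt⟩ = a'.1 t := by
      rw [glue_lt j a' b' ⟨(t : ℕ), lt_trans t.isLt j.isLt⟩ t.isLt]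
    rw [← h1, ← h2, hfun]
  have hb : b = b' := by
    apply Subtype.ext; funext t
    have hidx : (j : ℕ) + 1 + (t : ℕ) < k + 1 := by
      have := t.isLt; have := j.isLt; omega
    have hji : (j : ℕ) < (⟨(j : ℕ) + 1 + (t : ℕ), hidx⟩ : Fin (k+1)) := by
      simp only [Fin.val_mk]; omega
    have h1 : glue j a b ⟨(j : ℕ) + 1 + (t : ℕ), hidx⟩ = b.1 t + j := by
      rw [glue_gt j a b ⟨(j : ℕ) + 1 + (t : ℕ), hidx⟩ hji]
      congr 2
      exact congrArg _ (Fin.ext (by simp only [Fin.val_mk]; omega))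
    have h2 : glue j a' b' ⟨(j : ℕ) + 1 + (t : ℕ), hidx⟩ = b'.1 t + j := by
      rw [glue_gt j a' b' ⟨(j : ℕ) + 1 + (t : ℕ), hidx⟩ hji]
      congr 2
      exact congrArg _ (Fin.ext (by simp only [Fin.val_mk]; omega))
    rw [← hfun] at h2
    omega
  rw [ha, hb]

lemma glueMon_surjective (k : ℕ) : Function.Surjective (glueMon (k := k)) := by
  intro m
  set j := maxIdx m with hjdef
  refine ⟨⟨j, (⟨fun t => m.1 ⟨(t : ℕ), lt_trans t.isLt j.isLt⟩, ?_, ?_⟩,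
             ⟨fun t => m.1 ⟨(j : ℕ) + 1 + (t : ℕ), by have := t.isLt; have := j.isLt; omega⟩ - j, ?_, ?_⟩)⟩, ?_⟩
  · intro s t hst
    exact m.2.1 (show ((⟨(s:ℕ), lt_trans s.isLt j.isLt⟩ : Fin (k+1))) ≤
      ⟨(t:ℕ), lt_trans t.isLt j.isLt⟩ from (hst : (s:ℕ) ≤ (t:ℕ)))
  · intro t
    exact m.2.2 ⟨(t : ℕ), lt_trans t.isLt j.isLt⟩
  · intro s t hst
    apply Nat.sub_le_sub_right
    exact m.2.1 (show ((⟨(j:ℕ)+1+(s:ℕ), by have := s.isLt; have := j.isLt; omega⟩ : Fin (k+1))) ≤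
      ⟨(j:ℕ)+1+(t:ℕ), by have := t.isLt; have := j.isLt; omega⟩ from by
        show (j:ℕ)+1+(s:ℕ) ≤ (j:ℕ)+1+(t:ℕ); omega)
  · intro t
    have hidx : (j : ℕ) + 1 + (t : ℕ) < k + 1 := by have := t.isLt; have := j.isLt; omega
    have hle := m.2.2 ⟨(j : ℕ) + 1 + (t : ℕ), hidx⟩
    have hne : m.1 ⟨(j : ℕ) + 1 + (t : ℕ), hidx⟩ ≠ (j : ℕ) + 1 + (t : ℕ) := by
      intro heq
      have := le_maxIdx m ⟨(j : ℕ) + 1 + (t : ℕ), hidx⟩ heq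
      have : (j : ℕ) + 1 + (t : ℕ) ≤ (j : ℕ) := this
      omega
    simp only at hle ⊢
    omega
  · apply Subtype.ext; funext i
    show glue j _ _ i = m.1 i
    rcases lt_trichotomy (i : ℕ) (j : ℕ) with h | h | h
    · rw [glue_lt _ _ _ i h]
    · rw [glue_eq _ _ _ i h]
      have h1 := maxIdx_fix m
      have h2 : i = j := Fin.ext h
      rw [h2, hjdef]
      exact h1.symm
    · rw [glue_gt _ _ _ i h]
      simp only
      have hmono : m.1 j ≤ m.1 i := m.2.1 (le_of_lt h)
      have hfix := maxIdx_fix m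
      rw [← hjdef] at hfix
      have harg : (⟨(j : ℕ) + 1 + ((i : ℕ) - ((j : ℕ) + 1)), by have := i.isLt; have := j.isLt; omega⟩ : Fin (k+1)) = i := by
        apply Fin.ext
        show (j : ℕ) + 1 + ((i : ℕ) - ((j : ℕ) + 1)) = (i : ℕ)
        omega
      rw [harg]
      omega

lemma mon_card : ∀ k, Nat.card (Mon k) = catalan k := by
  intro k
  induction k using Nat.strong_induction_on with
  | _ k ih =>
    match k with
    | 0 => simp [Nat.card_unique, catalan_zero]
    | Nat.succ k =>
      have hbij : Function.Bijective (glueMon (k := k)) :=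
        ⟨glueMon_injective k, glueMon_surjective k⟩
      rw [← Nat.card_eq_of_bijective _ hbij]
      rw [Nat.card_eq_fintype_card, Fintype.card_sigma, catalan_succ]
      apply Finset.sum_congr rfl
      intro j _
      rw [← Nat.card_eq_fintype_card, Nat.card_prod]
      rw [ih j (by have := j.isLt; omega), ih (k - j) (by have := j.isLt; omega)]

abbrev TT (n : ℕ) := {p : Fin n × Fin n // p.1 < p.2}

abbrev FilterCond (n : ℕ) (F : Set (TT n)) : Prop :=
  (∀ a ∈ F, ∀ b : TT n, b.1.1 ≤ a.1.1 → a.1.2 ≤ b.1.2 → b ∈ F) ∧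
  (∀ a : TT n, a ∈ F → ((a.1.2 : ℕ) ≠ (a.1.1 : ℕ) + 1))

def idx2 {n : ℕ} (a : TT n) : Fin (n-1) :=
  ⟨(a.1.2 : ℕ) - 1, by
    have h1 : (a.1.1 : ℕ) < (a.1.2 : ℕ) := a.2
    have h2 := a.1.2.isLt
    omega⟩

def toFilter {n : ℕ} (m : Mon (n-1)) : {F : Set (TT n) // FilterCond n F} :=
  ⟨{a : TT n | (a.1.1 : ℕ) < m.1 (idx2 a)}, by
    constructor
    · intro a ha b hb1 hb2
      simp only [Set.mem_setOf_eq] at ha ⊢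
      have hb1' : (b.1.1 : ℕ) ≤ (a.1.1 : ℕ) := hb1
      have hmono := m.2.1 (show idx2 a ≤ idx2 b from by
        show (a.1.2 : ℕ) - 1 ≤ (b.1.2 : ℕ) - 1
        have : (a.1.2 : ℕ) ≤ (b.1.2 : ℕ) := hb2
        omega)
      omega
    · intro a ha heq
      simp only [Set.mem_setOf_eq] at ha
      have hb := m.2.2 (idx2 a)
      have hidx : ((idx2 a) : ℕ) = (a.1.2 : ℕ) - 1 := rfl
      have h1 : (a.1.1 : ℕ) < (a.1.2 : ℕ) := a.2
      omega⟩

lemma toFilter_mono_le {n : ℕ} (m m' : Mon (n-1))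
    (h : (toFilter (n := n) m).1 ⊆ (toFilter m').1) (t : Fin (n-1)) : m.1 t ≤ m'.1 t := by
  by_contra hcon
  push_neg at hcon
  have hbt := m.2.2 t
  have htn : (t : ℕ) < n - 1 := t.isLt
  have hi : m'.1 t < n := by omega
  have ht : (t : ℕ) + 1 < n := by omega
  have hlt : (⟨m'.1 t, hi⟩ : Fin n) < ⟨(t : ℕ)+1, ht⟩ := by
    show m'.1 t < (t : ℕ) + 1; omega
  have hidx : idx2 (⟨(⟨m'.1 t, hi⟩, ⟨(t : ℕ)+1, ht⟩), hlt⟩ : TT n) = t :=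
    Fin.ext (by show (t : ℕ) + 1 - 1 = (t : ℕ); omega)
  have hmem : (⟨(⟨m'.1 t, hi⟩, ⟨(t : ℕ)+1, ht⟩), hlt⟩ : TT n) ∈ (toFilter (n := n) m).1 := by
    show ((⟨m'.1 t, hi⟩ : Fin n) : ℕ) <
      m.1 (idx2 (⟨(⟨m'.1 t, hi⟩, ⟨(t : ℕ)+1, ht⟩), hlt⟩ : TT n))
    rw [hidx]
    exact hcon
  have hmem' := h hmem
  have hval : ((⟨m'.1 t, hi⟩ : Fin n) : ℕ) <
      m'.1 (idx2 (⟨(⟨m'.1 t, hi⟩, ⟨(t : ℕ)+1, ht⟩), hlt⟩ : TT n)) := hmem'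
  rw [hidx] at hval
  exact lt_irrefl _ hval

lemma toFilter_injective {n : ℕ} : Function.Injective (toFilter (n := n)) := by
  intro m m' h
  apply Subtype.ext; funext t
  have hsub : (toFilter (n := n) m).1 ⊆ (toFilter m').1 := by rw [h]
  have hsub' : (toFilter (n := n) m').1 ⊆ (toFilter m).1 := by rw [h]
  exact le_antisymm (toFilter_mono_le m m' hsub t) (toFilter_mono_le m' m hsub' t)

lemma toFilter_surjective {n : ℕ} : Function.Surjective (toFilter (n := n)) := by
  rintro ⟨S, h1, h2⟩
  classical
  set P : ℕ → Fin (n-1) → Prop := fun i t =>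
    ∃ (hi : i < n) (ht : (t : ℕ) + 1 < n) (hlt : (⟨i, hi⟩ : Fin n) < ⟨(t : ℕ)+1, ht⟩),
      (⟨(⟨i, hi⟩, ⟨(t : ℕ)+1, ht⟩), hlt⟩ : TT n) ∈ S with hPdef
  have hA : ∀ t : Fin (n-1), ¬ P (t : ℕ) t := by
    rintro t ⟨hi, ht, hlt, hmem⟩
    exact h2 _ hmem rfl
  have hB : ∀ (i i' : ℕ) (t : Fin (n-1)), i' ≤ i → P i t → P i' t := by
    rintro i i' t hle ⟨hi, ht, hlt, hmem⟩
    have hi' : i' < n := by omega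
    have hlt0 : i < (t : ℕ) + 1 := hlt
    have hlt' : (⟨i', hi'⟩ : Fin n) < ⟨(t : ℕ)+1, ht⟩ := by
      show i' < (t : ℕ) + 1; omega
    exact ⟨hi', ht, hlt', h1 _ hmem _ (show i' ≤ i from hle) (le_refl _)⟩
  have hC : ∀ (i : ℕ) (t t' : Fin (n-1)), t ≤ t' → P i t → P i t' := by
    rintro i t t' hle ⟨hi, ht, hlt, hmem⟩
    have htt : (t : ℕ) ≤ (t' : ℕ) := hle
    have ht' : (t' : ℕ) + 1 < n := by have := t'.isLt; omega
    have hlt0 : i < (t : ℕ) + 1 := hlt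
    have hlt' : (⟨i, hi⟩ : Fin n) < ⟨(t' : ℕ)+1, ht'⟩ := by
      show i < (t' : ℕ) + 1; omega
    exact ⟨hi, ht', hlt', h1 _ hmem _ (le_refl _)
      (show (t : ℕ) + 1 ≤ (t' : ℕ) + 1 from by omega)⟩
  have hne : ∀ t : Fin (n-1), {i : ℕ | ¬ P i t}.Nonempty := fun t => ⟨(t : ℕ), hA t⟩
  set mfun : Fin (n-1) → ℕ := fun t => sInf {i : ℕ | ¬ P i t} with hmdef
  have hkey : ∀ (i : ℕ) (t : Fin (n-1)), P i t ↔ i < mfun t := by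
    intro i t
    constructor
    · intro hp
      by_contra hcon
      push_neg at hcon
      have hmem := Nat.sInf_mem (hne t)
      exact hmem (hB i (mfun t) t hcon hp)
    · intro hlt
      by_contra hnp
      have hx : mfun t ≤ i := Nat.sInf_le (show i ∈ {i : ℕ | ¬ P i t} from hnp)
      omega
  have hle : ∀ t : Fin (n-1), mfun t ≤ (t : ℕ) := fun t => Nat.sInf_le (hA t)
  have hmono : Monotone mfun := by
    intro t t' hle'
    by_contra hcon
    push_neg at hcon
    have hp : P (mfun t') t := (hkey _ t).mpr hcon
    have hp' : P (mfun t') t' := hC _ t t' hle' hp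
    have := (hkey _ t').mp hp'
    omega
  refine ⟨⟨mfun, hmono, hle⟩, ?_⟩
  apply Subtype.ext
  ext a
  simp only [toFilter, Set.mem_setOf_eq]
  have hv1 : (a.1.1 : ℕ) < (a.1.2 : ℕ) := a.2
  have hv2 := a.1.2.isLt
  have hPa : P ((a.1.1 : Fin n) : ℕ) (idx2 a) ↔ a ∈ S := by
    constructor
    · rintro ⟨hi, ht, hlt, hmem⟩
      have hea : (⟨(⟨((a.1.1 : Fin n) : ℕ), hi⟩, ⟨((idx2 a) : ℕ)+1, ht⟩), hlt⟩ : TT n) = a := by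
        apply Subtype.ext
        apply Prod.ext <;> apply Fin.ext
        · rfl
        · show (a.1.2 : ℕ) - 1 + 1 = (a.1.2 : ℕ); omega
      rwa [hea] at hmem
    · intro hmem
      have hi : ((a.1.1 : Fin n) : ℕ) < n := a.1.1.isLt
      have ht : ((idx2 a) : ℕ) + 1 < n := by
        show (a.1.2 : ℕ) - 1 + 1 < n; omega
      have hlt : (⟨((a.1.1 : Fin n) : ℕ), hi⟩ : Fin n) < ⟨((idx2 a) : ℕ)+1, ht⟩ := by
        show (a.1.1 : ℕ) < (a.1.2 : ℕ) - 1 + 1; omega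
      refine ⟨hi, ht, hlt, ?_⟩
      have hea : (⟨(⟨((a.1.1 : Fin n) : ℕ), hi⟩, ⟨((idx2 a) : ℕ)+1, ht⟩), hlt⟩ : TT n) = a := by
        apply Subtype.ext
        apply Prod.ext <;> apply Fin.ext
        · rfl
        · show (a.1.2 : ℕ) - 1 + 1 = (a.1.2 : ℕ); omega
      rwa [hea]
  rw [← hPa]
  exact (hkey _ _).symm

end CatAux

/-- The positive roots of `A_{n−1}` are identified with pairs `(i,j)`, `1 ≤ i < j ≤ n`,
ordered by `(i,j) ≤ (k,l)` iff `k ≤ i` and `j ≤ l`.  The number of order filters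
containing no simple root (no pair of the form `(i, i+1)`) equals the Catalan number
`C_{n−1} = (1/n)·C(2n−2, n−1)`. -/
theorem positive_filters_typeA_catalan (n : ℕ) (hn : 1 ≤ n) :
    Nat.card {F : Set {p : Fin n × Fin n // p.1 < p.2} //
        (∀ a ∈ F, ∀ b : {p : Fin n × Fin n // p.1 < p.2},
          b.1.1 ≤ a.1.1 → a.1.2 ≤ b.1.2 → b ∈ F) ∧
        (∀ a : {p : Fin n × Fin n // p.1 < p.2}, a ∈ F → ((a.1.2 : ℕ) ≠ (a.1.1 : ℕ) + 1))}
      = catalan (n - 1) := by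
  rw [← CatAux.mon_card (n-1)]
  exact (Nat.card_eq_of_bijective _
    ⟨CatAux.toFilter_injective (n := n), CatAux.toFilter_surjective (n := n)⟩).symm
end

section
/- For all m ≥ 1, n ≥ 1: Σ_{k=0}^{n} (−1)^{n−k}·C(n,k)·C(mn+k−1,k) = C(mn−1, n). -/
open Finset

lemma ortho_choose (n i : ℕ) :
    ∑ k ∈ Finset.range (n + 1),
        (-1 : ℤ) ^ (n - k) * (n.choose k : ℤ) * (k.choose i : ℤ)
      = if i = n then 1 else 0 := by
  rcases le_or_gt i n with hi | hi
  · have h1 : ∑ k ∈ Finset.range (n + 1),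
        (-1 : ℤ) ^ (n - k) * (n.choose k : ℤ) * (k.choose i : ℤ)
        = ∑ k ∈ Finset.Ico i (n + 1),
        (-1 : ℤ) ^ (n - k) * (n.choose k : ℤ) * (k.choose i : ℤ) := by
      rw [Finset.range_eq_Ico]
      refine (Finset.sum_subset (Finset.Ico_subset_Ico (Nat.zero_le _) le_rfl) ?_).symm
      intro k hk hk'
      simp only [Finset.mem_Ico] at hk hk'
      have : k < i := by omega
      rw [Nat.choose_eq_zero_of_lt this]
      simp
    rw [h1, Finset.sum_Ico_eq_sum_range]
    have h2 : ∀ j ∈ Finset.range (n + 1 - i),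
        (-1 : ℤ) ^ (n - (i + j)) * (n.choose (i + j) : ℤ) * ((i + j).choose i : ℤ)
        = (n.choose i : ℤ) * ((-1 : ℤ) ^ ((n - i) - j) * ((n - i).choose j : ℤ)) := by
      intro j hj
      simp only [Finset.mem_range] at hj
      have hij : i + j ≤ n := by omega
      have hmul : n.choose (i + j) * (i + j).choose i
          = n.choose i * (n - i).choose j := by
        have := Nat.choose_mul (n := n) (k := i + j) (s := i) (Nat.le_add_right _ _)
        simpa [Nat.add_sub_cancel_left] using this
      have hcast : (n.choose (i + j) : ℤ) * ((i + j).choose i : ℤ)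
          = (n.choose i : ℤ) * ((n - i).choose j : ℤ) := by
        exact_mod_cast congrArg (Nat.cast : ℕ → ℤ) hmul
      have hexp : n - (i + j) = (n - i) - j := by omega
      rw [hexp]
      linear_combination ((-1 : ℤ)) ^ (n - i - j) * hcast
    rw [Finset.sum_congr rfl h2, ← Finset.mul_sum]
    set s := n - i with hs
    have hrange : n + 1 - i = s + 1 := by omega
    rw [hrange]
    have h3 : ∑ j ∈ Finset.range (s + 1),
        (-1 : ℤ) ^ (s - j) * ((s.choose j : ℤ))
        = (-1 : ℤ) ^ s * ∑ j ∈ Finset.range (s + 1), (-1 : ℤ) ^ j * (s.choose j : ℤ) := by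
      rw [Finset.mul_sum]
      refine Finset.sum_congr rfl fun j hj => ?_
      simp only [Finset.mem_range] at hj
      have hsj : s + j = (s - j) + 2 * j := by omega
      rw [← mul_assoc, ← pow_add, hsj, pow_add, pow_mul]
      norm_num
    rw [h3, Int.alternating_sum_range_choose]
    rcases eq_or_lt_of_le hi with h | h
    · subst h
      simp [hs]
    · have hs0 : s ≠ 0 := by omega
      have hin : i ≠ n := by omega
      simp [hs0, hin]
  · have : ∀ k ∈ Finset.range (n + 1),
        (-1 : ℤ) ^ (n - k) * (n.choose k : ℤ) * (k.choose i : ℤ) = 0 := by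
      intro k hk
      simp only [Finset.mem_range] at hk
      rw [Nat.choose_eq_zero_of_lt (show k < i by omega)]
      simp
    rw [Finset.sum_congr rfl this]
    simp [Nat.ne_of_gt hi]

lemma key_choose (N n : ℕ) :
    ∑ k ∈ Finset.range (n + 1),
        (-1 : ℤ) ^ (n - k) * (n.choose k : ℤ) * ((N + k).choose k : ℤ)
      = (N.choose n : ℤ) := by
  have hvand : ∀ k, k ≤ n → ((N + k).choose k : ℤ)
      = ∑ i ∈ Finset.range (n + 1), (N.choose i : ℤ) * (k.choose i : ℤ) := by
    intro k hkle
    have h := Nat.add_choose_eq N k k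
    rw [Finset.Nat.sum_antidiagonal_eq_sum_range_succ_mk] at h
    have h' : (N + k).choose k = ∑ i ∈ Finset.range (k + 1), N.choose i * k.choose i := by
      rw [h]
      refine Finset.sum_congr rfl fun i hi => ?_
      simp only [Finset.mem_range] at hi
      rw [Nat.choose_symm (by omega)]
    have hext : ∑ i ∈ Finset.range (k + 1), (N.choose i : ℤ) * (k.choose i : ℤ)
        = ∑ i ∈ Finset.range (n + 1), (N.choose i : ℤ) * (k.choose i : ℤ) := by
      refine Finset.sum_subset (Finset.range_subset_range.2 (by omega)) ?_
      intro i hi hi'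
      simp only [Finset.mem_range] at hi hi'
      rw [Nat.choose_eq_zero_of_lt (show k < i by omega)]
      simp
    calc ((N + k).choose k : ℤ)
        = ∑ i ∈ Finset.range (k + 1), (N.choose i : ℤ) * (k.choose i : ℤ) := by
          rw [h']; push_cast; rfl
      _ = _ := hext
  calc ∑ k ∈ Finset.range (n + 1),
        (-1 : ℤ) ^ (n - k) * (n.choose k : ℤ) * ((N + k).choose k : ℤ)
      = ∑ k ∈ Finset.range (n + 1), ∑ i ∈ Finset.range (n + 1),
          (N.choose i : ℤ) * ((-1 : ℤ) ^ (n - k) * (n.choose k : ℤ) * (k.choose i : ℤ)) := by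
        refine Finset.sum_congr rfl fun k hk => ?_
        simp only [Finset.mem_range] at hk
        rw [hvand k (by omega), Finset.mul_sum]
        refine Finset.sum_congr rfl fun i _ => by ring
    _ = ∑ i ∈ Finset.range (n + 1), (N.choose i : ℤ) *
          ∑ k ∈ Finset.range (n + 1),
            (-1 : ℤ) ^ (n - k) * (n.choose k : ℤ) * (k.choose i : ℤ) := by
        rw [Finset.sum_comm]
        refine Finset.sum_congr rfl fun i _ => by rw [Finset.mul_sum]
    _ = ∑ i ∈ Finset.range (n + 1), (N.choose i : ℤ) * (if i = n then 1 else 0) := by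
        refine Finset.sum_congr rfl fun i _ => by rw [ortho_choose]
    _ = (N.choose n : ℤ) := by
        simp

/-- `Σ_{k=0}^{n} (−1)^{n−k}·C(n,k)·C(mn+k−1,k) = C(mn−1, n)` for all `m ≥ 1`, `n ≥ 1`:
the top h-number `h⁺_n(B_n, m) = C(mn−1,n)` is recovered from the f-numbers
`f⁺_{k−1}(B_n,m) = C(n,k)·C(mn+k−1,k)` via `h_n = Σ_k (−1)^{n−k} f_{k−1}`. -/
theorem top_h_from_f_typeB (m n : ℕ) (hm : 1 ≤ m) (hn : 1 ≤ n) :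
    ∑ k ∈ Finset.range (n + 1),
        (-1 : ℤ) ^ (n - k) * (n.choose k : ℤ) * ((m * n + k - 1).choose k : ℤ)
      = ((m * n - 1).choose n : ℤ) := by
  have h1 : 1 ≤ m * n := Nat.one_le_iff_ne_zero.2 (by positivity)
  have h2 : ∀ k : ℕ, m * n + k - 1 = (m * n - 1) + k := fun k => by omega
  simp only [h2]
  exact key_choose (m * n - 1) n
end

section
/- Let P be the root poset of an irreducible crystallographic root system Φ (positive roots ordered by α ≤ β iff β − α is a nonnegative combination of positive roots). An antichain in P consisting of roots α₁, …, α_r has the property that if a positive root α lies in the nonnegative real span of {α₁,…,α_r}, i.e., α = Σ λᵢαᵢ with λᵢ ≥ 0 real, then in type A_{n−1} the coefficients λᵢ are nonnegative integers. -/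
/-- The positive root of `A_{n−1}` indexed by a pair `i < j`, namely `e_i − e_j ∈ ℝⁿ`. -/
def typeARoot (n : ℕ) (p : {p : Fin n × Fin n // p.1 < p.2}) : Fin n → ℝ :=
  fun k => (if k = p.1.1 then 1 else 0) - (if k = p.1.2 then 1 else 0)

/-- The root-poset order of `A_{n−1}`: `α ≤ β` iff `β − α` is a nonnegative combination
of positive roots. -/
def typeARootLE (n : ℕ) (α β : Fin n → ℝ) : Prop :=
  ∃ c : {p : Fin n × Fin n // p.1 < p.2} → ℝ,
    (∀ p, 0 ≤ c p) ∧ β - α = ∑ p, c p • typeARoot n p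

/-! ### Auxiliary: indicator functions of half-open intervals `(s, t]` in `ℕ` -/

/-- Real-valued indicator of the half-open interval `(s, t]`. -/
def chi (s t m : ℕ) : ℝ := if s < m ∧ m ≤ t then 1 else 0

lemma chi_nonneg (s t m : ℕ) : 0 ≤ chi s t m := by unfold chi; split_ifs <;> norm_num

lemma chi_eq_one (s t m : ℕ) (h1 : s < m) (h2 : m ≤ t) : chi s t m = 1 := by
  unfold chi; rw [if_pos ⟨h1, h2⟩]

lemma chi_cases (s t m : ℕ) : chi s t m = 0 ∨ chi s t m = 1 := by
  unfold chi; split_ifs <;> simp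

lemma lt_of_chi_eq_one (s t m : ℕ) (h : chi s t m = 1) : s < m ∧ m ≤ t := by
  by_contra hc; rw [chi, if_neg hc] at h; norm_num at h

lemma chi_split (S t0 T m : ℕ) (h1 : S ≤ t0) (h2 : t0 ≤ T) :
    chi S T m - chi S t0 m = chi t0 T m := by
  unfold chi; split_ifs <;> (try norm_num) <;> omega

/-- For indices with positive coefficient, the interval is contained in `(S,T]`. -/
lemma contained {r : ℕ} (s t : Fin r → ℕ) (hst : ∀ i, s i < t i)
    (lam : Fin r → ℝ) (hlam : ∀ i, 0 ≤ lam i) (S T : ℕ)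
    (h : ∀ m, ∑ i, lam i * chi (s i) (t i) m = chi S T m)
    (j : Fin r) (hj : 0 < lam j) : S ≤ s j ∧ t j ≤ T := by
  have key : ∀ m, s j < m → m ≤ t j → (S < m ∧ m ≤ T) := by
    intro m h1 h2
    have hpos : 0 < ∑ i, lam i * chi (s i) (t i) m := by
      have : lam j * chi (s j) (t j) m ≤ ∑ i, lam i * chi (s i) (t i) m :=
        Finset.single_le_sum (f := fun i => lam i * chi (s i) (t i) m)
          (fun i _ => mul_nonneg (hlam i) (chi_nonneg _ _ _)) (Finset.mem_univ j)
      rw [chi_eq_one _ _ _ h1 h2, mul_one] at this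
      linarith
    rw [h m] at hpos
    rcases chi_cases S T m with h0 | h1'
    · rw [h0] at hpos; exact absurd hpos (lt_irrefl 0)
    · exact lt_of_chi_eq_one _ _ _ h1'
  have h1 := key (s j + 1) (Nat.lt_succ_self _) (hst j)
  have h2 := key (t j) (hst j) le_rfl
  omega

/-- Key combinatorial lemma: if intervals `(s i, t i]` have pairwise distinct left
endpoints and a nonnegative combination of their indicators equals the indicator of an
interval `(S, T]`, then every coefficient is `0` or `1`. -/
lemma key_lemma (N : ℕ) : ∀ (r : ℕ) (s t : Fin r → ℕ), (∀ i, s i < t i) →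
    (∀ i j : Fin r, s i = s j → i = j) →
    ∀ (lam : Fin r → ℝ), (∀ i, 0 ≤ lam i) → ∀ (S T : ℕ), T - S ≤ N →
    (∀ m, ∑ i, lam i * chi (s i) (t i) m = chi S T m) →
    ∀ i, lam i = 0 ∨ lam i = 1 := by
  induction N with
  | zero =>
    intro r s t hst hs lam hlam S T hN h i
    left
    have hz : ∀ m, chi S T m = 0 := by
      intro m; unfold chi; rw [if_neg]; omega
    by_contra hne
    have hj : 0 < lam i := lt_of_le_of_ne (hlam i) (Ne.symm hne)
    have := contained s t hst lam hlam S T h i hj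
    have := hst i
    have := hz
    omega
  | succ N ih =>
    intro r s t hst hs lam hlam S T hN h
    by_cases hall : ∀ i, lam i = 0
    · intro i; exact Or.inl (hall i)
    push_neg at hall
    obtain ⟨j0, hj0⟩ := hall
    have hne : (Finset.univ.filter fun i => lam i ≠ 0).Nonempty :=
      ⟨j0, by simp [hj0]⟩
    obtain ⟨i0, hi0mem, hi0min⟩ := Finset.exists_min_image _ s hne
    have hi0pos : 0 < lam i0 := by
      have := (Finset.mem_filter.mp hi0mem).2
      exact lt_of_le_of_ne (hlam i0) (Ne.symm this)
    obtain ⟨hSi0, hTi0⟩ := contained s t hst lam hlam S T h i0 hi0pos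
    have hSltT : S < T := by have := hst i0; omega
    have hS1 : ∑ i, lam i * chi (s i) (t i) (S+1) = 1 := by
      rw [h (S+1), chi_eq_one _ _ _ (Nat.lt_succ_self _) hSltT]
    have hex : ∃ j, lam j ≠ 0 ∧ s j ≤ S := by
      by_contra hc
      push_neg at hc
      have : ∑ i, lam i * chi (s i) (t i) (S+1) = 0 := by
        apply Finset.sum_eq_zero
        intro i _
        by_cases hi : lam i = 0
        · rw [hi, zero_mul]
        · have : S < s i := hc i hi
          have : chi (s i) (t i) (S+1) = 0 := by unfold chi; rw [if_neg]; omega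
          rw [this, mul_zero]
      rw [this] at hS1; norm_num at hS1
    obtain ⟨j, hjne, hjS⟩ := hex
    have hjpos : 0 < lam j := lt_of_le_of_ne (hlam j) (Ne.symm hjne)
    have hjmem : j ∈ Finset.univ.filter fun i => lam i ≠ 0 := by simp [hjne]
    have hsj : s j = S := by
      have := (contained s t hst lam hlam S T h j hjpos).1; omega
    have hsi0 : s i0 = S := by
      have := hi0min j hjmem; omega
    have hlam1 : lam i0 = 1 := by
      rw [← hS1]
      rw [Finset.sum_eq_single i0]
      · rw [chi_eq_one _ _ _ (by omega) (by have := hst i0; omega), mul_one]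
      · intro b _ hb
        by_cases hbz : lam b = 0
        · rw [hbz, zero_mul]
        · have hbpos : 0 < lam b := lt_of_le_of_ne (hlam b) (Ne.symm hbz)
          have hbS := (contained s t hst lam hlam S T h b hbpos).1
          have : chi (s b) (t b) (S+1) = 0 := by
            unfold chi; rw [if_neg]
            intro ⟨h1', _⟩
            have : s b = S := by omega
            exact hb (hs b i0 (by omega))
          rw [this, mul_zero]
      · intro hi; exact absurd (Finset.mem_univ i0) hi
    set lam' := Function.update lam i0 0 with hlam'def
    have hlam'nonneg : ∀ i, 0 ≤ lam' i := by
      intro i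
      by_cases hi : i = i0
      · rw [hi, hlam'def, Function.update_self]
      · rw [hlam'def, Function.update_of_ne hi]; exact hlam i
    have hnew : ∀ m, ∑ i, lam' i * chi (s i) (t i) m = chi (t i0) T m := by
      intro m
      have hterm : ∀ i, lam i * chi (s i) (t i) m = lam' i * chi (s i) (t i) m
          + (if i = i0 then lam i0 * chi (s i0) (t i0) m else 0) := by
        intro i
        by_cases hi : i = i0
        · subst hi; simp [hlam'def]
        · simp [hlam'def, Function.update_of_ne hi, hi]
      have hsum : ∑ i, lam' i * chi (s i) (t i) m
          = (∑ i, lam i * chi (s i) (t i) m) - lam i0 * chi (s i0) (t i0) m := by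
        rw [eq_sub_iff_add_eq, Finset.sum_congr rfl (fun i _ => hterm i),
          Finset.sum_add_distrib, Finset.sum_ite_eq' Finset.univ i0,
          if_pos (Finset.mem_univ i0)]
      have hi0st := hst i0
      rw [hsum, h m, hlam1, one_mul, hsi0]
      exact chi_split S (t i0) T m (by omega) hTi0
    have hi0st := hst i0
    have := ih r s t hst hs lam' hlam'nonneg (t i0) T (by omega) hnew
    intro i
    by_cases hi : i = i0
    · right; rw [hi]; exact hlam1
    · have := this i
      rw [hlam'def, Function.update_of_ne hi] at this
      exact this

/-! ### Bridging lemmas between roots and interval indicators -/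

/-- The vector `e_{A.1} − e_{A.2}` for an arbitrary (possibly degenerate) pair. -/
def root' (n : ℕ) (A : Fin n × Fin n) : Fin n → ℝ :=
  fun k => (if k = A.1 then 1 else 0) - (if k = A.2 then 1 else 0)

lemma typeARoot_eq_root' (n : ℕ) (p : {p : Fin n × Fin n // p.1 < p.2}) :
    typeARoot n p = root' n p.1 := rfl

lemma sum_single_pair (n : ℕ) (A : Fin n × Fin n) (hA : A.1 ≤ A.2) :
    ∑ p : {p : Fin n × Fin n // p.1 < p.2}, (if p.1 = A then (1:ℝ) else 0) • typeARoot n p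
      = root' n A := by
  by_cases h : A.1 < A.2
  · rw [Finset.sum_eq_single_of_mem ⟨A, h⟩ (Finset.mem_univ _)]
    · rw [if_pos rfl, one_smul, typeARoot_eq_root']
    · intro b _ hb
      rw [if_neg, zero_smul]
      intro hb1
      exact hb (Subtype.ext hb1)
  · have hAeq : A.1 = A.2 := le_antisymm hA (not_lt.mp h)
    rw [Finset.sum_eq_zero]
    · funext k
      simp [root', hAeq]
    · intro p _
      rw [if_neg, zero_smul]
      intro hp
      exact h (hp ▸ p.2)

lemma root'_sub (n : ℕ) (A B : Fin n × Fin n) :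
    root' n B - root' n A = root' n (B.1, A.1) + root' n (A.2, B.2) := by
  funext k
  simp only [root', Pi.sub_apply, Pi.add_apply]
  ring

/-- Containment of intervals implies the root-poset order. -/
lemma le_of_containment (n : ℕ) (p q : {p : Fin n × Fin n // p.1 < p.2})
    (h1 : q.1.1 ≤ p.1.1) (h2 : p.1.2 ≤ q.1.2) :
    typeARootLE n (typeARoot n p) (typeARoot n q) := by
  refine ⟨fun r => (if r.1 = (q.1.1, p.1.1) then 1 else 0)
    + (if r.1 = (p.1.2, q.1.2) then 1 else 0), ?_, ?_⟩
  · intro r; dsimp only; split_ifs <;> norm_num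
  · have : ∀ r : {p : Fin n × Fin n // p.1 < p.2},
        ((if r.1 = (q.1.1, p.1.1) then (1:ℝ) else 0)
          + (if r.1 = (p.1.2, q.1.2) then 1 else 0)) • typeARoot n r
        = (if r.1 = (q.1.1, p.1.1) then (1:ℝ) else 0) • typeARoot n r
          + (if r.1 = (p.1.2, q.1.2) then (1:ℝ) else 0) • typeARoot n r := by
      intro r; rw [add_smul]
    rw [Finset.sum_congr rfl (fun r _ => this r), Finset.sum_add_distrib,
      sum_single_pair n (q.1.1, p.1.1) h1, sum_single_pair n (p.1.2, q.1.2) h2,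
      typeARoot_eq_root', typeARoot_eq_root']
    exact root'_sub n p.1 q.1

/-- Partial sums of a positive root give the indicator of the half-open interval. -/
lemma PS_root (n : ℕ) (p : {p : Fin n × Fin n // p.1 < p.2}) (m : ℕ) :
    ∑ k ∈ Finset.univ.filter (fun k : Fin n => (k : ℕ) < m), typeARoot n p k
      = chi p.1.1 p.1.2 m := by
  have hp : (p.1.1 : ℕ) < (p.1.2 : ℕ) := p.2
  rw [show (fun k => typeARoot n p k) = typeARoot n p from rfl]
  simp only [typeARoot.eq_def, Finset.sum_sub_distrib]
  rw [Finset.sum_ite_eq' _ p.1.1 (fun _ => (1:ℝ)),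
      Finset.sum_ite_eq' _ p.1.2 (fun _ => (1:ℝ))]
  simp only [Finset.mem_filter, Finset.mem_univ, true_and]
  unfold chi
  split_ifs <;> (try norm_num) <;> omega

/-- If `α₁,…,α_r` is an antichain in the root poset of `A_{n−1}` and a positive root
`α = Σᵢ λᵢ αᵢ` with all `λᵢ ≥ 0` real, then each coefficient `λᵢ` is a nonnegative
integer. -/
theorem antichain_coefficients_are_nonneg_integers (n r : ℕ)
    (a : Fin r → {p : Fin n × Fin n // p.1 < p.2})
    (hantichain : ∀ i j, i ≠ j →
      ¬ typeARootLE n (typeARoot n (a i)) (typeARoot n (a j)))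
    (q : {p : Fin n × Fin n // p.1 < p.2})
    (lam : Fin r → ℝ) (hlam : ∀ i, 0 ≤ lam i)
    (heq : typeARoot n q = ∑ i, lam i • typeARoot n (a i)) :
    ∀ i, ∃ k : ℕ, lam i = k := by
  set s : Fin r → ℕ := fun i => ((a i).1.1 : ℕ) with hs_def
  set t : Fin r → ℕ := fun i => ((a i).1.2 : ℕ) with ht_def
  have hst : ∀ i, s i < t i := fun i => (a i).2
  have hsinj : ∀ i j : Fin r, s i = s j → i = j := by
    intro i j hij
    have hij' : ((a i).1.1 : ℕ) = ((a j).1.1 : ℕ) := hij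
    by_contra hne
    rcases le_or_gt ((a i).1.2 : ℕ) ((a j).1.2 : ℕ) with hle | hlt
    · exact hantichain i j hne (le_of_containment n (a i) (a j)
        (by rw [Fin.le_def]; omega) (by rw [Fin.le_def]; omega))
    · exact hantichain j i (Ne.symm hne) (le_of_containment n (a j) (a i)
        (by rw [Fin.le_def]; omega) (by rw [Fin.le_def]; omega))
  have hchi : ∀ m, ∑ i, lam i * chi (s i) (t i) m = chi (q.1.1 : ℕ) (q.1.2 : ℕ) m := by
    intro m
    rw [← PS_root n q m, heq]
    have happ : ∀ k : Fin n, (∑ i, lam i • typeARoot n (a i)) k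
        = ∑ i, lam i * typeARoot n (a i) k := by
      intro k; simp [Finset.sum_apply]
    rw [Finset.sum_congr rfl fun k _ => happ k, Finset.sum_comm]
    apply Finset.sum_congr rfl
    intro i _
    rw [← Finset.mul_sum, PS_root n (a i) m]
  have hq : (q.1.1 : ℕ) < (q.1.2 : ℕ) := q.2
  have := key_lemma (q.1.2 : ℕ) r s t hst hsinj lam hlam (q.1.1 : ℕ) (q.1.2 : ℕ)
    (by omega) hchi
  intro i
  rcases this i with h0 | h1
  · exact ⟨0, by rw [h0]; norm_num⟩
  · exact ⟨1, by rw [h1]; norm_num⟩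
end
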